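/- Let Γ be an infinite subgroup of the unit circle and let X = (α, β) ∩ Γ be an arc intersected with Γ, with arc length less than 1/k of the circle (i.e., β·α⁻¹ = e(t) with 0 < t < 1/m for the given m). Then for every positive integer k ≤ m, the k-fold product set {x_1·x_2⋯x_k : x_1, …, x_k ∈ X} equals (α^k, β^k) ∩ Γ. -/

import Mathlib

/-!
Write `α = e(a)`. Since `t < 1`, the arc `(α, β)` is the image under `e` of the interval
`(a, a + t)`, and `Γ` pulls back to an additive subgroup `G ⊇ ℤ` of `ℝ`, which is dense because `Γ`
is infinite. As `k t < 1` as well, both sides of the theorem are images under `e` of subsets of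
intervals of length less than `1`, and the theorem becomes `k • (I ∩ G) = k I ∩ G` for the open
interval `I = (a, a + t)`. This follows by induction from `(I ∩ G) + (J ∩ G) = (I + J) ∩ G`: for
`w ∈ (I + J) ∩ G`, density supplies `x ∈ G` in the nonempty open interval `I ∩ (w - J)`.
-/

noncomputable def uexp (x : ℝ) : ℂ := Complex.exp (2 * Real.pi * Complex.I * x)

def Orient (α β γ : ℂ) : Prop :=
  ∃ x y z : ℝ, x < y ∧ y < z ∧ z - x < 1 ∧ α = uexp x ∧ β = uexp y ∧ γ = uexp z

def arc (α β : ℂ) : Set ℂ := {γ | Orient α γ β}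

open Set
open scoped Pointwise

section DenseSubgroup

variable {A : Type*} [AddCommGroup A] [LinearOrder A] [IsOrderedAddMonoid A] [TopologicalSpace A]
  [OrderTopology A] [DenselyOrdered A] {G : AddSubgroup A}

theorem Ioo_inter_add_Ioo_inter (hG : Dense (G : Set A)) {a b c d : A} (hab : a < b)
    (hcd : c < d) : (Ioo a b ∩ G) + (Ioo c d ∩ G) = Ioo (a + c) (b + d) ∩ G := by
  ext w
  constructor
  · rintro ⟨x, ⟨hx, hxG⟩, y, ⟨hy, hyG⟩, rfl⟩
    exact ⟨⟨add_lt_add hx.1 hy.1, add_lt_add hx.2 hy.2⟩, G.add_mem hxG hyG⟩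
  · rintro ⟨⟨hcw, hwd⟩, hwG⟩
    have hne : max a (w - d) < min b (w - c) :=
      max_lt (lt_min hab (lt_sub_iff_add_lt.2 hcw))
        (lt_min (sub_lt_iff_lt_add.2 hwd) (sub_lt_sub_left hcd w))
    obtain ⟨x, hxG, hx⟩ := hG.exists_mem_open isOpen_Ioo (nonempty_Ioo.2 hne)
    simp only [mem_Ioo, max_lt_iff, lt_min_iff] at hx
    refine ⟨x, ⟨⟨hx.1.1, hx.2.1⟩, hxG⟩, w - x, ⟨⟨?_, ?_⟩, G.sub_mem hwG hxG⟩, add_sub_cancel _ _⟩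
    · exact lt_sub_comm.1 hx.2.2
    · exact sub_lt_comm.1 hx.1.2

theorem nsmul_Ioo_inter (hG : Dense (G : Set A)) {a b : A} (hab : a < b) {k : ℕ} (hk : 0 < k) :
    k • (Ioo a b ∩ G) = Ioo (k • a) (k • b) ∩ G := by
  induction k, hk using Nat.le_induction with
  | base => simp
  | succ k hk ih =>
    rw [succ_nsmul, ih, Ioo_inter_add_Ioo_inter hG (nsmul_lt_nsmul_right (by omega) hab) hab,
      succ_nsmul, succ_nsmul]

end DenseSubgroup

theorem uexp_add (x y : ℝ) : uexp (x + y) = uexp x * uexp y := by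
  simp only [uexp, ← Complex.exp_add]; push_cast; ring_nf

theorem uexp_zero : uexp 0 = 1 := by simp [uexp]

theorem uexp_neg (x : ℝ) : uexp (-x) = (uexp x)⁻¹ := by
  simp only [uexp, ← Complex.exp_neg]; push_cast; ring_nf

theorem uexp_natCast_mul (n : ℕ) (x : ℝ) : uexp (n * x) = uexp x ^ n := by
  simp only [uexp, ← Complex.exp_nat_mul]; push_cast; ring_nf

theorem uexp_intCast_mul (n : ℤ) (x : ℝ) : uexp (n * x) = uexp x ^ n := by
  simp only [uexp, ← Complex.exp_int_mul]; push_cast; ring_nf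

theorem uexp_intCast (n : ℤ) : uexp n = 1 := by
  rw [uexp]; simpa [mul_comm] using Complex.exp_int_mul_two_pi_mul_I n

theorem uexp_eq_uexp_iff {x y : ℝ} : uexp x = uexp y ↔ ∃ n : ℤ, x = y + n := by
  have h2πI : (2 * Real.pi * Complex.I : ℂ) ≠ 0 := by simp [Real.pi_ne_zero]
  rw [uexp, uexp, Complex.exp_eq_exp_iff_exists_int]
  refine exists_congr fun n => ?_
  rw [show 2 * Real.pi * Complex.I * y + n * (2 * Real.pi * Complex.I) =
      2 * Real.pi * Complex.I * ((y + n : ℝ) : ℂ) by push_cast; ring,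
    mul_right_inj' h2πI, Complex.ofReal_inj]

theorem exists_uexp_of_norm_eq_one {z : ℂ} (hz : ‖z‖ = 1) : ∃ x : ℝ, z = uexp x := by
  refine ⟨z.arg / (2 * Real.pi), ?_⟩
  conv_lhs => rw [← Complex.norm_mul_exp_arg_mul_I z, hz]
  rw [uexp]
  push_cast
  field_simp

theorem arc_uexp_eq_image {a t : ℝ} (ht0 : 0 < t) (ht1 : t < 1) :
    arc (uexp a) (uexp (a + t)) = uexp '' Ioo a (a + t) := by
  ext γ
  constructor
  · rintro ⟨x, y, z, hxy, hyz, hzx, hx, rfl, hz⟩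
    obtain ⟨p, hp⟩ := uexp_eq_uexp_iff.1 hx
    obtain ⟨q, hq⟩ := uexp_eq_uexp_iff.1 hz
    -- `z - x = t + p - q` and `t` both lie in `(0, 1)`
    obtain rfl : p = q := by
      have h1 : ((p - q : ℤ) : ℝ) < 1 := by push_cast; linarith
      have h2 : (-1 : ℝ) < ((p - q : ℤ) : ℝ) := by push_cast; linarith
      have h1' : p - q < 1 := by exact_mod_cast h1
      have h2' : -1 < p - q := by exact_mod_cast h2
      omega
    exact ⟨y + p, ⟨by linarith, by linarith⟩, uexp_eq_uexp_iff.2 ⟨p, rfl⟩⟩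
  · rintro ⟨y, hy, rfl⟩
    exact ⟨a, y, a + t, hy.1, hy.2, by linarith, rfl, rfl, rfl⟩

theorem image_uexp_add (s t : Set ℝ) : uexp '' (s + t) = uexp '' s * uexp '' t :=
  image_image2_distrib uexp_add

theorem image_uexp_nsmul (s : Set ℝ) (n : ℕ) : uexp '' (n • s) = (uexp '' s) ^ n := by
  induction n with
  | zero => simp [uexp_zero, Set.singleton_one]
  | succ n ih => rw [succ_nsmul, pow_succ, image_uexp_add, ih]

def uexpPreimage (Γ : Set ℂ) (hone : (1 : ℂ) ∈ Γ) (hmul : ∀ x ∈ Γ, ∀ y ∈ Γ, x * y ∈ Γ)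
    (hinv : ∀ x ∈ Γ, x⁻¹ ∈ Γ) : AddSubgroup ℝ where
  carrier := uexp ⁻¹' Γ
  zero_mem' := by simpa [uexp_zero]
  add_mem' hx hy := by simpa [uexp_add] using hmul _ hx _ hy
  neg_mem' hx := by simpa [uexp_neg] using hinv _ hx

theorem dense_uexpPreimage {Γ : Set ℂ} (hsub : ∀ z ∈ Γ, ‖z‖ = 1) (hone : (1 : ℂ) ∈ Γ)
    (hmul : ∀ x ∈ Γ, ∀ y ∈ Γ, x * y ∈ Γ) (hinv : ∀ x ∈ Γ, x⁻¹ ∈ Γ) (hinf : Γ.Infinite) :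
    Dense (uexpPreimage Γ hone hmul hinv : Set ℝ) := by
  refine (AddSubgroup.dense_or_cyclic _).resolve_right ?_
  rintro ⟨a, ha⟩
  have mem_iff (x : ℝ) : uexp x ∈ Γ ↔ ∃ j : ℤ, j * a = x := by
    change x ∈ uexpPreimage Γ hone hmul hinv ↔ _
    rw [ha, AddSubgroup.mem_closure_singleton]
    simp only [zsmul_eq_mul]
  -- `1 = n * a`, so every element of `Γ` is an `n`-th root of unity
  have huexp_one : uexp 1 = 1 := by simpa using uexp_intCast 1
  obtain ⟨n, hn⟩ := (mem_iff 1).1 (huexp_one ▸ hone)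
  have hn0 : n ≠ 0 := by rintro rfl; simp at hn
  refine hinf ((Polynomial.nthRootsFinset n.natAbs (1 : ℂ)).finite_toSet.subset fun z hz => ?_)
  obtain ⟨x, rfl⟩ := exists_uexp_of_norm_eq_one (hsub z hz)
  obtain ⟨j, rfl⟩ := (mem_iff x).1 hz
  have hpow : uexp (j * a) ^ n = 1 := by
    rw [← uexp_intCast_mul, mul_left_comm, hn, mul_one, uexp_intCast]
  rw [Finset.mem_coe, Polynomial.mem_nthRootsFinset (Int.natAbs_pos.2 hn0)]
  obtain ⟨N, rfl | rfl⟩ := Int.eq_nat_or_neg n <;> simpa using hpow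

theorem product_of_arc_general (Γ : Set ℂ) (hsub : ∀ z ∈ Γ, ‖z‖ = 1)
    (hone : (1 : ℂ) ∈ Γ) (hmul : ∀ x ∈ Γ, ∀ y ∈ Γ, x * y ∈ Γ)
    (hinv : ∀ x ∈ Γ, x⁻¹ ∈ Γ) (hinf : Γ.Infinite)
    (m : ℕ) (α β : ℂ) (hα : ‖α‖ = 1)
    (t : ℝ) (ht0 : 0 < t) (htm : t < 1 / m) (hβ : β = α * uexp t)
    (k : ℕ) (hk : 0 < k) (hkm : k ≤ m) :
    {z : ℂ | ∃ x : Fin k → ℂ, (∀ i, x i ∈ arc α β ∩ Γ) ∧ z = ∏ i, x i} =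
      arc (α ^ k) (β ^ k) ∩ Γ := by
  obtain ⟨a, rfl⟩ := exists_uexp_of_norm_eq_one hα
  have hkt : k * t < 1 := by
    have hm : (0 : ℝ) < m := by exact_mod_cast hk.trans_le hkm
    calc k * t ≤ m * t := by gcongr
      _ < 1 := by rwa [lt_div_iff₀ hm, mul_comm] at htm
  set G := uexpPreimage Γ hone hmul hinv
  have hG : Dense (G : Set ℝ) := dense_uexpPreimage hsub hone hmul hinv hinf
  have arc_pow_inter {n : ℕ} (hn : 0 < n) (hnt : n * t < 1) :
      arc (uexp a ^ n) (β ^ n) ∩ Γ = uexp '' (n • (Ioo a (a + t) ∩ G)) := by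
    rw [nsmul_Ioo_inter hG (by linarith) hn, hβ, mul_pow, ← uexp_natCast_mul,
      ← uexp_natCast_mul, ← uexp_add, arc_uexp_eq_image (by positivity) hnt,
      nsmul_eq_mul, nsmul_eq_mul, mul_add]
    exact (image_inter_preimage _ _ _).symm
  calc {z : ℂ | ∃ x : Fin k → ℂ, (∀ i, x i ∈ arc (uexp a) β ∩ Γ) ∧ z = ∏ i, x i}
      = (arc (uexp a) β ∩ Γ) ^ k := by ext; simp [mem_pow_iff_prod, eq_comm]
    _ = uexp '' (k • (Ioo a (a + t) ∩ G)) := by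
      have ht1 : t < 1 := (le_mul_of_one_le_left ht0.le (by exact_mod_cast hk)).trans_lt hkt
      rw [image_uexp_nsmul, ← one_nsmul (Ioo a (a + t) ∩ G), ← arc_pow_inter one_pos (by simpa)]
      simp
    _ = arc (uexp a ^ k) (β ^ k) ∩ Γ := (arc_pow_inter hk hkt).symm

theorem product_of_arc (Γ : Set ℂ) (hsub : ∀ z ∈ Γ, ‖z‖ = 1)
    (hone : (1 : ℂ) ∈ Γ) (hmul : ∀ x ∈ Γ, ∀ y ∈ Γ, x * y ∈ Γ)
    (hinv : ∀ x ∈ Γ, x⁻¹ ∈ Γ) (hinf : Γ.Infinite)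
    (m : ℕ) (hm : 0 < m) (α β : ℂ) (hα : ‖α‖ = 1)
    (t : ℝ) (ht0 : 0 < t) (htm : t < 1 / m) (hβ : β = α * uexp t)
    (k : ℕ) (hk : 0 < k) (hkm : k ≤ m) :
    {z : ℂ | ∃ x : Fin k → ℂ, (∀ i, x i ∈ arc α β ∩ Γ) ∧ z = ∏ i, x i} =
      arc (α ^ k) (β ^ k) ∩ Γ :=
  product_of_arc_general Γ hsub hone hmul hinv hinf m α β hα t ht0 htm hβ k hk hkm
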